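/- arXiv:1603.00706 — 2 statements merged into one kernel-verified Lean document; each statement's English description precedes it below -/
import Mathlib

section
/- (Key linear-algebra inequality from the proof of Proposition 3.1, equation (3.3).) Let n ≥ 1, let S be a real symmetric positive semidefinite 2n×2n matrix, and let J be a real 2n×2n matrix with J² = -Id. Define the J-invariant part S^J := (1/2)(S + Jᵀ S J). Then S^J is symmetric positive semidefinite and det S ≤ 2^{2n-1} det(S^J). -/
/-!
Conjugation by `J` preserves positive semidefiniteness and, because `(det J)² = det (-1) = 1` in
even dimension, also the determinant; so it suffices that the determinant is superadditive on
positive semidefinite matrices. If `A` is definite, the congruence by `A^{-1/2}` turns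
`det A + det B ≤ det (A + B)` into `1 + ∏ μᵢ ≤ ∏ (1 + μᵢ)` for the eigenvalues `μᵢ ≥ 0` of
`A^{-1/2} B A^{-1/2}`; if neither `A` nor `B` is definite, both determinants vanish.
-/

open Matrix

namespace Matrix
variable {ι : Type*} [Fintype ι] [DecidableEq ι]

lemma IsHermitian.det_one_add {C : Matrix ι ι ℝ} (hC : C.IsHermitian) :
    (1 + C).det = ∏ i, (1 + hC.eigenvalues i) := by
  conv_lhs => rw [hC.spectral_theorem]
  rw [← map_one (Unitary.conjStarAlgAut ℝ _ hC.eigenvectorUnitary), ← map_add]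
  simp [-Unitary.conjStarAlgAut_apply, ← diagonal_one, diagonal_add]

lemma PosSemidef.one_add_det_le_det_one_add [Nonempty ι] {C : Matrix ι ι ℝ} (hC : C.PosSemidef) :
    1 + C.det ≤ (1 + C).det := by
  obtain ⟨i⟩ := ‹Nonempty ι›
  have hev := hC.eigenvalues_nonneg
  have := Finset.prod_add_prod_le (Finset.mem_univ i)
    (f := fun j => 1 + hC.isHermitian.eigenvalues j)
    (g := hC.isHermitian.eigenvalues) (h := fun _ => 1) (add_comm _ _).le
    (fun _ _ _ => le_add_of_nonneg_left zero_le_one) (fun j _ _ => le_add_of_nonneg_right (hev j))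
    (fun j _ => hev j) (fun _ _ => zero_le_one)
  rw [hC.isHermitian.det_one_add, hC.isHermitian.det_eq_prod_eigenvalues, add_comm]
  simpa using this

open scoped MatrixOrder in
lemma PosDef.det_add_det_le_det_add [Nonempty ι] {A B : Matrix ι ι ℝ} (hA : A.PosDef)
    (hB : B.PosSemidef) : A.det + B.det ≤ (A + B).det := by
  set R := CFC.sqrt A
  have hRR : R * R = A := CFC.sqrt_mul_sqrt_self A hA.posSemidef.nonneg
  have hR : IsUnit R.det :=
    (isUnit_iff_isUnit_det R).mp (isUnit_of_mul_isUnit_left (hRR ▸ hA.isUnit))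
  have hRinv : (R⁻¹)ᴴ = R⁻¹ := by
    rw [conjTranspose_nonsing_inv, (CFC.sqrt_nonneg A).posSemidef.isHermitian.eq]
  set C := R⁻¹ * B * R⁻¹
  have hC : C.PosSemidef := by simpa only [hRinv] using hB.conjTranspose_mul_mul_same R⁻¹
  have hB_eq : B = R * C * R := by
    simp only [C, ← mul_assoc, mul_nonsing_inv _ hR, one_mul]
    rw [mul_assoc, nonsing_inv_mul _ hR, mul_one]
  have hAB : A + B = R * (1 + C) * R := by rw [mul_add, add_mul, mul_one, hRR, ← hB_eq]
  have hdetA : A.det = R.det * R.det := by rw [← hRR, det_mul]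
  calc A.det + B.det = A.det * (1 + C.det) := by rw [hB_eq, det_mul, det_mul, hdetA]; ring
    _ ≤ A.det * (1 + C).det :=
      mul_le_mul_of_nonneg_left hC.one_add_det_le_det_one_add hA.det_pos.le
    _ = (A + B).det := by rw [hAB, det_mul, det_mul, hdetA]; ring

lemma PosSemidef.det_add_det_le_det_add [Nonempty ι] {A B : Matrix ι ι ℝ} (hA : A.PosSemidef)
    (hB : B.PosSemidef) : A.det + B.det ≤ (A + B).det := by
  by_cases hA' : A.PosDef
  · exact hA'.det_add_det_le_det_add hB
  by_cases hB' : B.PosDef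
  · rw [add_comm A.det, add_comm A]
    exact hB'.det_add_det_le_det_add hA
  rw [hA.posDef_iff_det_ne_zero, not_not] at hA'
  rw [hB.posDef_iff_det_ne_zero, not_not] at hB'
  rw [hA', hB', add_zero]
  exact (hA.add hB).det_nonneg

lemma det_transpose_mul_mul_eq_of_mul_self_eq_neg_one {R : Type*} [CommRing R]
    {J : Matrix ι ι R} (hJ : J * J = -1) (hι : Even (Fintype.card ι)) (S : Matrix ι ι R) :
    (Jᵀ * S * J).det = S.det := by
  have hJdet : J.det * J.det = 1 := by
    rw [← det_mul, hJ, det_neg, det_one, mul_one, hι.neg_one_pow]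
  rw [det_mul, det_mul, det_transpose]
  linear_combination S.det * hJdet

end Matrix

/-- **Equation (3.3): key linear-algebra inequality.** If `S` is a real symmetric positive
semidefinite `2n×2n` matrix and `J` is a real `2n×2n` matrix with `J² = -Id`, then the
`J`-invariant part `S^J := (1/2)(S + Jᵀ S J)` is symmetric positive semidefinite and
`det S ≤ 2^{2n-1} det(S^J)`. -/
theorem det_le_pow_det_J_invariant_part
    (n : ℕ) (hn : 1 ≤ n)
    (S J : Matrix (Fin (2*n)) (Fin (2*n)) ℝ)
    (hS : S.PosSemidef)
    (hJ : J * J = -1) :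
    ((1/2 : ℝ) • (S + Jᵀ * S * J)).PosSemidef ∧
      S.det ≤ 2^(2*n - 1) * ((1/2 : ℝ) • (S + Jᵀ * S * J)).det := by
  have : Nonempty (Fin (2*n)) := ⟨⟨0, by omega⟩⟩
  have hJS : (Jᵀ * S * J).PosSemidef := by
    simpa [conjTranspose_eq_transpose_of_trivial] using hS.conjTranspose_mul_mul_same J
  have hdet : (Jᵀ * S * J).det = S.det :=
    det_transpose_mul_mul_eq_of_mul_self_eq_neg_one hJ (by simp) S
  have hsum : 2 * S.det ≤ (S + Jᵀ * S * J).det := by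
    linarith [hS.det_add_det_le_det_add hJS]
  have hscale : (2 : ℝ) ^ (2*n - 1) * (1/2) ^ (2*n) = 1/2 := by
    obtain ⟨m, hm⟩ : ∃ m, 2*n = m + 1 := ⟨2*n - 1, by omega⟩
    rw [hm, Nat.add_sub_cancel, pow_succ, ← mul_assoc, ← mul_pow]
    norm_num
  refine ⟨(hS.add hJS).smul (by norm_num), ?_⟩
  rw [det_smul, Fintype.card_fin, ← mul_assoc, hscale]
  linarith
end

section
/- (First derivative of the largest eigenvalue; first formula of the Lemma containing equation (5.9).) Let m ≥ 1 and define f : M_m(ℝ) → ℝ by f(B) := sup { xᵀ B x : x ∈ ℝ^m, ‖x‖ = 1 }, so that for symmetric B, f(B) is the largest eigenvalue of B. Let A be a real symmetric m×m matrix whose largest eigenvalue λ₁ is simple (its eigenspace is one-dimensional), and let V ∈ ℝ^m be a unit eigenvector of A with eigenvalue λ₁. Then f is Fréchet differentiable at A, with derivative the linear map H ↦ Vᵀ H V. -/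
open Matrix

/-- The largest-eigenvalue function `f(B) = sup { xᵀ B x : ‖x‖ = 1 }` on real `m×m`
matrices (for symmetric `B` this is the largest eigenvalue of `B`). -/
noncomputable def lamMax {m : ℕ} (B : Matrix (Fin m) (Fin m) ℝ) : ℝ :=
  sSup { r : ℝ | ∃ x : Fin m → ℝ, (∑ i, (x i)^2) = 1 ∧ r = x ⬝ᵥ B *ᵥ x }

attribute [local instance] Matrix.normedAddCommGroup Matrix.normedSpace

/-!
Since `λ₁` is simple and maximal, `A` has a spectral gap `δ > 0` on `V^⊥`:
`wᵀ A w ≤ (λ₁ - δ) ‖w‖²` there. Writing a unit vector as `x = α V + w` with `α ≥ 0`, this gives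
`xᵀ A x ≤ λ₁ - δ ‖w‖²`, while `xᵀ H x ≤ Vᵀ H V + 2 ‖H‖ ‖x - V‖` and `‖x - V‖² ≤ 2 ‖w‖²`.
Balancing the gain `δ ‖w‖²` against the loss `2 ‖H‖ ‖x - V‖` yields
`λ₁ + Vᵀ H V ≤ f(A + H) ≤ λ₁ + Vᵀ H V + O(‖H‖²)`, the lower bound coming from `x = V`.
-/

open scoped RealInnerProductSpace

theorem hasFDerivAt_of_norm_sub_le_mul_sq {𝕜 F G : Type*} [NontriviallyNormedField 𝕜]
    [NormedAddCommGroup F] [NormedSpace 𝕜 F] [NormedAddCommGroup G] [NormedSpace 𝕜 G]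
    {f : F → G} {f' : F →L[𝕜] G} {a : F} {C : ℝ}
    (h : ∀ y, ‖f (a + y) - f a - f' y‖ ≤ C * ‖y‖ ^ 2) : HasFDerivAt f f' a :=
  hasFDerivAt_iff_isLittleO_nhds_zero.2 <|
    (Asymptotics.IsBigO.of_bound C (.of_forall fun y => by simpa using h y)).trans_isLittleO
      (Asymptotics.isLittleO_norm_pow_id one_lt_two)

section InnerProductSpace

variable {E : Type*} [NormedAddCommGroup E] [InnerProductSpace ℝ E]

namespace LinearMap.IsSymmetric

theorem exists_pos_inner_apply_self_le_of_eigenvalue_lt [FiniteDimensional ℝ E]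
    {T : E →ₗ[ℝ] E} (hT : T.IsSymmetric) {μ : ℝ}
    (h : ∀ ν (x : E), x ≠ 0 → T x = ν • x → ν < μ) :
    ∃ δ > 0, ∀ x, ⟪T x, x⟫ ≤ (μ - δ) * ‖x‖ ^ 2 := by
  rcases subsingleton_or_nontrivial E with hE | hE
  · exact ⟨1, one_pos, fun x => by simp [Subsingleton.elim x 0]⟩
  obtain ⟨x₀, hx₀⟩ := hT.hasEigenvalue_iSup_of_finiteDimensional.exists_hasEigenvector
  set s := ⨆ x : { x : E // x ≠ 0 }, RCLike.re ⟪T x, x⟫ / ‖(x : E)‖ ^ 2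
  have hs : s < μ := h s x₀ hx₀.2 hx₀.apply_eq_smul
  have hbdd : BddAbove
      (Set.range fun x : { x : E // x ≠ 0 } => RCLike.re ⟪T x, x⟫ / ‖(x : E)‖ ^ 2) :=
    ⟨‖LinearMap.toContinuousLinearMap T‖, by
      rintro _ ⟨x, rfl⟩
      exact (abs_le.1 ((LinearMap.toContinuousLinearMap T).rayleighQuotient_le_norm x)).2⟩
  refine ⟨μ - s, by linarith, fun x => ?_⟩
  rcases eq_or_ne x 0 with rfl | hx
  · simp
  have hq := le_ciSup hbdd ⟨x, hx⟩
  rw [div_le_iff₀ (by positivity), RCLike.re_to_real] at hq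
  linarith

theorem exists_pos_inner_apply_self_le_of_simple_top_eigenvalue [FiniteDimensional ℝ E]
    {T : E →ₗ[ℝ] E} (hT : T.IsSymmetric) {v : E} {μ : ℝ} (hv : T v = μ • v)
    (hmax : ∀ ν (x : E), x ≠ 0 → T x = ν • x → ν ≤ μ)
    (hsimple : ∀ x, T x = μ • x → ∃ c : ℝ, x = c • v) :
    ∃ δ > 0, ∀ w, ⟪v, w⟫ = 0 → ⟪T w, w⟫ ≤ (μ - δ) * ‖w‖ ^ 2 := by
  have hK : ∀ w ∈ (ℝ ∙ v)ᗮ, T w ∈ (ℝ ∙ v)ᗮ := fun w hw => by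
    rw [Submodule.mem_orthogonal_singleton_iff_inner_right] at hw ⊢
    rw [← hT, hv, real_inner_smul_left, hw, mul_zero]
  obtain ⟨δ, hδ, hgap⟩ :=
    (hT.restrict_invariant hK).exists_pos_inner_apply_self_le_of_eigenvalue_lt (μ := μ)
      fun ν w hw0 hw => by
        have hTw : T w = ν • (w : E) := congrArg Subtype.val hw
        have hw0' : (w : E) ≠ 0 := by simpa using hw0
        refine (hmax ν w hw0' hTw).lt_of_ne fun hν => hw0' ?_
        obtain ⟨c, hc⟩ := hsimple w (hν ▸ hTw)
        exact Submodule.disjoint_def.1 (Submodule.orthogonal_disjoint _) (w : E)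
          (Submodule.mem_span_singleton.2 ⟨c, hc.symm⟩) w.2
  exact ⟨δ, hδ, fun w hw =>
    hgap ⟨w, Submodule.mem_orthogonal_singleton_iff_inner_right.2 hw⟩⟩

theorem inner_apply_smul_add_self {T : E →ₗ[ℝ] E} (hT : T.IsSymmetric) {v w : E} {μ : ℝ}
    (hv1 : ‖v‖ = 1) (hv : T v = μ • v) (hvw : ⟪v, w⟫ = 0) (α : ℝ) :
    ⟪T (α • v + w), α • v + w⟫ = μ * α ^ 2 + ⟪T w, w⟫ := by
  have hTwv : ⟪T w, v⟫ = 0 := by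
    rw [hT, hv, real_inner_smul_right, real_inner_comm, hvw, mul_zero]
  simp only [map_add, map_smul, inner_add_left, inner_add_right, real_inner_smul_left,
    real_inner_smul_right, hTwv, hv, real_inner_self_eq_norm_sq, hv1, hvw]
  ring

end LinearMap.IsSymmetric

theorem ContinuousLinearMap.inner_apply_self_sub_le (S : E →L[ℝ] E) (x v : E) :
    ⟪S x, x⟫ - ⟪S v, v⟫ ≤ ‖S‖ * ‖x - v‖ * (‖x‖ + ‖v‖) :=
  calc ⟪S x, x⟫ - ⟪S v, v⟫ = ⟪S (x - v), x⟫ + ⟪S v, x - v⟫ := by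
        simp only [map_sub, inner_sub_left, inner_sub_right]; ring
    _ ≤ ‖S (x - v)‖ * ‖x‖ + ‖S v‖ * ‖x - v‖ :=
        add_le_add (real_inner_le_norm _ _) (real_inner_le_norm _ _)
    _ ≤ ‖S‖ * ‖x - v‖ * ‖x‖ + ‖S‖ * ‖v‖ * ‖x - v‖ := by gcongr <;> exact S.le_opNorm _
    _ = ‖S‖ * ‖x - v‖ * (‖x‖ + ‖v‖) := by ring

theorem LinearMap.IsSymmetric.inner_apply_self_add_le_of_gap {T : E →ₗ[ℝ] E}
    (hT : T.IsSymmetric) {v : E} {μ δ : ℝ} (hv1 : ‖v‖ = 1) (hv : T v = μ • v) (hδ : 0 < δ)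
    (hgap : ∀ w, ⟪v, w⟫ = 0 → ⟪T w, w⟫ ≤ (μ - δ) * ‖w‖ ^ 2) (S : E →L[ℝ] E) {x : E}
    (hx : ‖x‖ = 1) :
    ⟪T x, x⟫ + ⟪S x, x⟫ ≤ μ + ⟪S v, v⟫ + 2 * ‖S‖ ^ 2 / δ := by
  wlog hα : 0 ≤ ⟪v, x⟫ generalizing x
  · simpa using this (x := -x) (by rwa [norm_neg]) (by rw [inner_neg_right]; linarith)
  obtain ⟨α, w, hvw, rfl⟩ : ∃ α w, ⟪v, w⟫ = 0 ∧ x = α • v + w :=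
    ⟨⟪v, x⟫, x - ⟪v, x⟫ • v, by simp [inner_sub_right, real_inner_smul_right, hv1], by simp⟩
  have hpyth (β : ℝ) : ‖β • v + w‖ ^ 2 = β ^ 2 + ‖w‖ ^ 2 := by
    rw [norm_add_sq_real, real_inner_smul_left, hvw, norm_smul, hv1, mul_one, mul_zero,
      mul_zero, add_zero, Real.norm_eq_abs, sq_abs]
  have hnorm : 1 = α ^ 2 + ‖w‖ ^ 2 := by rw [← hpyth, hx, one_pow]
  have hdist : ‖α • v + w - v‖ ^ 2 = (α - 1) ^ 2 + ‖w‖ ^ 2 := by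
    rw [← hpyth, sub_smul, one_smul, add_sub_right_comm]
  have hTx : ⟪T (α • v + w), α • v + w⟫ ≤ μ - δ * ‖w‖ ^ 2 := by
    rw [hT.inner_apply_smul_add_self hv1 hv hvw α]
    linear_combination hgap w hvw - μ * hnorm
  have hSx := S.inner_apply_self_sub_le (α • v + w) v
  rw [hx, hv1] at hSx
  rw [inner_add_right, real_inner_smul_right, real_inner_self_eq_norm_sq, hv1, hvw] at hα
  set d := ‖α • v + w - v‖
  have hα1 : α ≤ 1 := by nlinarith [sq_nonneg ‖w‖]
  have hd : d ^ 2 ≤ 2 * ‖w‖ ^ 2 := by nlinarith [mul_nonneg hα (sub_nonneg.2 hα1)]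
  have hAMGM : 2 * ‖S‖ * d ≤ δ / 2 * d ^ 2 + 2 * ‖S‖ ^ 2 / δ := by
    have : δ / 2 * d ^ 2 + 2 * ‖S‖ ^ 2 / δ - 2 * ‖S‖ * d = (δ * d - 2 * ‖S‖) ^ 2 / (2 * δ) := by
      field_simp; ring
    rw [← sub_nonneg, this]; positivity
  linear_combination hTx + hSx + hAMGM + δ / 2 * hd

end InnerProductSpace

theorem EuclideanSpace.norm_toLp_eq_one_iff {n : Type*} [Fintype n] (x : n → ℝ) :
    ‖WithLp.toLp 2 x‖ = 1 ↔ ∑ i, x i ^ 2 = 1 := by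
  simp [EuclideanSpace.norm_eq, Real.sqrt_eq_one]

namespace Matrix

variable {n : Type*} [Fintype n] [DecidableEq n]

theorem dotProduct_mulVec_self_eq_inner (B : Matrix n n ℝ) (x : n → ℝ) :
    x ⬝ᵥ B *ᵥ x = ⟪toEuclideanCLM (𝕜 := ℝ) B (WithLp.toLp 2 x), WithLp.toLp 2 x⟫ := by
  rw [real_inner_comm, inner_toEuclideanCLM]

theorem exists_norm_toEuclideanCLM_le :
    ∃ C, ∀ B : Matrix n n ℝ, ‖toEuclideanCLM (𝕜 := ℝ) B‖ ≤ C * ‖B‖ :=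
  ⟨_, (LinearMap.toContinuousLinearMap
    (toEuclideanCLM (𝕜 := ℝ) (n := n)).toAlgEquiv.toLinearMap).le_opNorm⟩

theorem IsSymm.exists_dotProduct_add_mulVec_le {A : Matrix n n ℝ} (hA : A.IsSymm) {μ : ℝ}
    {V : n → ℝ} (hV : ∑ i, V i ^ 2 = 1) (hVeig : A *ᵥ V = μ • V)
    (hmax : ∀ ν : ℝ, (∃ v : n → ℝ, v ≠ 0 ∧ A *ᵥ v = ν • v) → ν ≤ μ)
    (hsimple : ∀ w : n → ℝ, A *ᵥ w = μ • w → ∃ c : ℝ, w = c • V) :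
    ∃ K, ∀ H x, ∑ i, x i ^ 2 = 1 → x ⬝ᵥ (A + H) *ᵥ x ≤ μ + V ⬝ᵥ H *ᵥ V + K * ‖H‖ ^ 2 := by
  have hT : (toEuclideanCLM (𝕜 := ℝ) A : EuclideanSpace ℝ n →ₗ[ℝ] _).IsSymmetric := by
    rw [coe_toEuclideanCLM_eq_toEuclideanLin, isSymmetric_toEuclideanLin_iff,
      isHermitian_iff_isSymm]
    exact hA
  have hv : toEuclideanCLM (𝕜 := ℝ) A (WithLp.toLp 2 V) = μ • WithLp.toLp 2 V :=
    congrArg (WithLp.toLp 2) hVeig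
  obtain ⟨δ, hδ, hgap⟩ := hT.exists_pos_inner_apply_self_le_of_simple_top_eigenvalue hv
    (fun ν x hx hTx => hmax ν ⟨x.ofLp, (WithLp.ofLp_eq_zero 2).not.2 hx, congrArg WithLp.ofLp hTx⟩)
    (fun x hTx => (hsimple x.ofLp (congrArg WithLp.ofLp hTx)).imp fun c hc =>
      congrArg (WithLp.toLp 2) hc)
  obtain ⟨C, hC⟩ := exists_norm_toEuclideanCLM_le (n := n)
  refine ⟨2 * C ^ 2 / δ, fun H x hx => ?_⟩
  have hS : 2 * ‖toEuclideanCLM (𝕜 := ℝ) H‖ ^ 2 / δ ≤ 2 * C ^ 2 / δ * ‖H‖ ^ 2 :=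
    calc 2 * ‖toEuclideanCLM (𝕜 := ℝ) H‖ ^ 2 / δ ≤ 2 * (C * ‖H‖) ^ 2 / δ := by grw [hC H]
      _ = 2 * C ^ 2 / δ * ‖H‖ ^ 2 := by ring
  have key := hT.inner_apply_self_add_le_of_gap ((EuclideanSpace.norm_toLp_eq_one_iff V).2 hV)
    hv hδ hgap (toEuclideanCLM (𝕜 := ℝ) H) ((EuclideanSpace.norm_toLp_eq_one_iff x).2 hx)
  rw [ContinuousLinearMap.coe_coe] at key
  rw [dotProduct_mulVec_self_eq_inner, map_add, _root_.add_apply, inner_add_left,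
    dotProduct_mulVec_self_eq_inner H V]
  linarith

end Matrix

section lamMax

variable {m : ℕ}

theorem lamMax_le {B : Matrix (Fin m) (Fin m) ℝ} {c : ℝ} {x₀ : Fin m → ℝ}
    (hx₀ : ∑ i, x₀ i ^ 2 = 1) (h : ∀ x : Fin m → ℝ, ∑ i, x i ^ 2 = 1 → x ⬝ᵥ B *ᵥ x ≤ c) :
    lamMax B ≤ c :=
  csSup_le ⟨_, x₀, hx₀, rfl⟩ <| by rintro _ ⟨x, hx, rfl⟩; exact h x hx

theorem le_lamMax {B : Matrix (Fin m) (Fin m) ℝ} {c : ℝ}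
    (h : ∀ x : Fin m → ℝ, ∑ i, x i ^ 2 = 1 → x ⬝ᵥ B *ᵥ x ≤ c) {x : Fin m → ℝ}
    (hx : ∑ i, x i ^ 2 = 1) : x ⬝ᵥ B *ᵥ x ≤ lamMax B :=
  le_csSup ⟨c, by rintro _ ⟨y, hy, rfl⟩; exact h y hy⟩ ⟨x, hx, rfl⟩

end lamMax

theorem lamMax_hasFDerivAt_general
    (m : ℕ)
    (A : Matrix (Fin m) (Fin m) ℝ) (hA : A.IsSymm)
    (lam1 : ℝ) (V : Fin m → ℝ)
    (hVunit : (∑ i, (V i)^2) = 1)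
    (hVeig : A *ᵥ V = lam1 • V)
    (hmax : ∀ lam : ℝ, (∃ v : Fin m → ℝ, v ≠ 0 ∧ A *ᵥ v = lam • v) → lam ≤ lam1)
    (hsimple : ∀ w : Fin m → ℝ, A *ᵥ w = lam1 • w → ∃ c : ℝ, w = c • V) :
    ∃ L : Matrix (Fin m) (Fin m) ℝ →L[ℝ] ℝ,
      (∀ H : Matrix (Fin m) (Fin m) ℝ, L H = V ⬝ᵥ H *ᵥ V) ∧
      HasFDerivAt lamMax L A := by
  obtain ⟨K, hK⟩ := hA.exists_dotProduct_add_mulVec_le hVunit hVeig hmax hsimple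
  have hVAV : V ⬝ᵥ A *ᵥ V = lam1 := by
    have hVV : V ⬝ᵥ V = 1 := by simpa [dotProduct, sq] using hVunit
    rw [hVeig, dotProduct_smul, smul_eq_mul, hVV, mul_one]
  have hlower (H) : lam1 + V ⬝ᵥ H *ᵥ V ≤ lamMax (A + H) := by
    simpa [add_mulVec, hVAV] using le_lamMax (hK H) hVunit
  have hupper (H) : lamMax (A + H) ≤ lam1 + V ⬝ᵥ H *ᵥ V + K * ‖H‖ ^ 2 :=
    lamMax_le hVunit (hK H)
  have hfA : lamMax A = lam1 := le_antisymm (by simpa using hupper 0) (by simpa using hlower 0)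
  let L : Matrix (Fin m) (Fin m) ℝ →ₗ[ℝ] ℝ :=
    { toFun := fun H => V ⬝ᵥ H *ᵥ V
      map_add' := fun H K => by simp [add_mulVec]
      map_smul' := fun c H => by simp [smul_mulVec] }
  refine ⟨L.toContinuousLinearMap, fun _ => rfl,
    hasFDerivAt_of_norm_sub_le_mul_sq (C := K) fun H => ?_⟩
  change |lamMax (A + H) - lamMax A - V ⬝ᵥ H *ᵥ V| ≤ _
  rw [hfA, abs_le]
  constructor <;> linarith [hlower H, hupper H]

/-- **First formula of the Lemma containing (5.9): first derivative of the largest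
eigenvalue.** If the largest eigenvalue `lam1` of the real symmetric matrix `A` is simple,
with a unit eigenvector `V`, then `lamMax` is Fréchet differentiable at `A` with derivative
`H ↦ Vᵀ H V`. -/
theorem lamMax_hasFDerivAt
    (m : ℕ) (hm : 1 ≤ m)
    (A : Matrix (Fin m) (Fin m) ℝ) (hA : A.IsSymm)
    (lam1 : ℝ) (V : Fin m → ℝ)
    (hVunit : (∑ i, (V i)^2) = 1)
    (hVeig : A *ᵥ V = lam1 • V)
    (hmax : ∀ lam : ℝ, (∃ v : Fin m → ℝ, v ≠ 0 ∧ A *ᵥ v = lam • v) → lam ≤ lam1)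
    (hsimple : ∀ w : Fin m → ℝ, A *ᵥ w = lam1 • w → ∃ c : ℝ, w = c • V) :
    ∃ L : Matrix (Fin m) (Fin m) ℝ →L[ℝ] ℝ,
      (∀ H : Matrix (Fin m) (Fin m) ℝ, L H = V ⬝ᵥ H *ᵥ V) ∧
      HasFDerivAt lamMax L A :=
  lamMax_hasFDerivAt_general m A hA lam1 V hVunit hVeig hmax hsimple
end
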